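/- Let H be a finite-dimensional complex inner product space, N ≥ 1, and 0 ≤ q ≤ N−1. Let (Π_y)_{y ∈ Fin N} be orthogonal projections on H with pairwise orthogonal ranges (Π_y ∘ Π_{y'} = 0 for y ≠ y'). Let ψ := ∑_{k=0}^{q} α_k • (ψ_k ⊗ k̂) ∈ H ⊗ EuclideanSpace ℂ (Fin N), where each ψ_k ∈ H is a unit vector, the α_k ∈ ℂ satisfy ∑_{k=0}^{q} |α_k|² ≤ 1, and k̂ is the k-th Fourier basis vector. Then ∑_{y ∈ Fin N} ‖(Π_y ⊗ |e_y⟩⟨e_y|) ψ‖² ≤ (q+1)/N. -/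

import Mathlib

open scoped Kronecker Matrix

noncomputable section

/-- `ω N = exp(2πi/N)`, the primitive `N`-th root of unity. -/
def ω (N : ℕ) : ℂ := Complex.exp (2 * Real.pi * Complex.I / N)

/-- The computational (standard) basis vector `e_y` of `EuclideanSpace ℂ (Fin N)`. -/
def e (N : ℕ) (y : Fin N) : EuclideanSpace ℂ (Fin N) := EuclideanSpace.single y 1

/-- The Fourier basis vector `k̂ = (1/√N) ∑_y ω_N^{k·y} • e_y`. -/
def fHat (N : ℕ) (k : Fin N) : EuclideanSpace ℂ (Fin N) :=
  (↑(Real.sqrt N))⁻¹ • ∑ y : Fin N, ω N ^ ((k : ℕ) * (y : ℕ)) • e N y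

/-- The tensor product of two Euclidean vectors, realized concretely:
`(x ⊗ z) (i, j) = x i * z j`. -/
def tp {ι κ : Type*} [Fintype ι] [Fintype κ]
    (x : EuclideanSpace ℂ ι) (z : EuclideanSpace ℂ κ) : EuclideanSpace ℂ (ι × κ) :=
  (EuclideanSpace.equiv (ι × κ) ℂ).symm fun p => x p.1 * z p.2

/-! The operator `Π_y ⊗ |e_y⟩⟨e_y|` only sees the `y`-th coordinate of each Fourier vector, which
is `ω^{ky}/√N`; so the `y`-th term equals `‖Π_y (∑_k α_k ω^{ky} ψ_k)‖² / N`. By Cauchy–Schwarz and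
`∑ |α_k|² ≤ 1` it is at most `∑_k ‖Π_y ψ_k‖² / N`. Summing over `y` first, the `Π_y` add up to an
orthogonal projection, so `∑_y ‖Π_y ψ_k‖² ≤ ‖ψ_k‖² = 1`, and the `q + 1` vectors `ψ_k` give
`(q + 1) / N`. -/

open scoped InnerProductSpace

namespace LinearMap.IsSymmetricProjection

variable {𝕜 E : Type*} [RCLike 𝕜] [NormedAddCommGroup E] [InnerProductSpace 𝕜 E]

theorem norm_sq_apply_eq_re_inner {T : E →ₗ[𝕜] E} (hT : T.IsSymmetricProjection) (x : E) :
    ‖T x‖ ^ 2 = RCLike.re ⟪x, T x⟫_𝕜 := by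
  rw [@norm_sq_eq_re_inner 𝕜, hT.isSymmetric, ← Module.End.mul_apply, hT.isIdempotentElem.eq]

theorem norm_apply_le {T : E →ₗ[𝕜] E} (hT : T.IsSymmetricProjection) (x : E) :
    ‖T x‖ ≤ ‖x‖ := by
  have h : ‖T x‖ ^ 2 ≤ ‖x‖ * ‖T x‖ := hT.norm_sq_apply_eq_re_inner x ▸ re_inner_le_norm x (T x)
  nlinarith [norm_nonneg x, norm_nonneg (T x)]

theorem sum {ι : Type*} [Fintype ι] {T : ι → E →ₗ[𝕜] E}
    (hT : ∀ i, (T i).IsSymmetricProjection) (horth : ∀ i j, i ≠ j → T i * T j = 0) :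
    (∑ i, T i).IsSymmetricProjection where
  isSymmetric := isSymmetric_sum _ fun i _ => (hT i).isSymmetric
  isIdempotentElem := by
    classical
    rw [IsIdempotentElem, Finset.sum_mul_sum]
    refine Finset.sum_congr rfl fun i _ => ?_
    rw [Finset.sum_eq_single i (fun j _ hji => horth i j hji.symm) (by simp)]
    exact (hT i).isIdempotentElem.eq

theorem sum_norm_sq_apply_le {ι : Type*} [Fintype ι] {T : ι → E →ₗ[𝕜] E}
    (hT : ∀ i, (T i).IsSymmetricProjection) (horth : ∀ i j, i ≠ j → T i * T j = 0) (x : E) :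
    ∑ i, ‖T i x‖ ^ 2 ≤ ‖x‖ ^ 2 := by
  have hS := sum hT horth
  calc ∑ i, ‖T i x‖ ^ 2 = ∑ i, RCLike.re ⟪x, T i x⟫_𝕜 :=
        Finset.sum_congr rfl fun i _ => (hT i).norm_sq_apply_eq_re_inner x
    _ = ‖(∑ i, T i) x‖ ^ 2 := by
        rw [hS.norm_sq_apply_eq_re_inner, LinearMap.sum_apply, inner_sum, map_sum]
    _ ≤ ‖x‖ ^ 2 := by gcongr; exact hS.norm_apply_le x

end LinearMap.IsSymmetricProjection

theorem Matrix.isSymmetricProjection_toEuclideanLin {𝕜 n : Type*} [RCLike 𝕜] [Fintype n]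
    [DecidableEq n] {A : Matrix n n 𝕜} (hA : A.IsHermitian) (hA2 : IsIdempotentElem A) :
    (toEuclideanLin A).IsSymmetricProjection where
  isSymmetric := isSymmetric_toEuclideanLin_iff.mpr hA
  isIdempotentElem := hA2.map (Matrix.toLpLinAlgEquiv (R := 𝕜) (n := n) 2)

theorem norm_sum_smul_sq_le {𝕜 F γ : Type*} [RCLike 𝕜] [NormedAddCommGroup F] [NormedSpace 𝕜 F]
    (s : Finset γ) (c : γ → 𝕜) (v : γ → F) :
    ‖∑ k ∈ s, c k • v k‖ ^ 2 ≤ (∑ k ∈ s, ‖c k‖ ^ 2) * ∑ k ∈ s, ‖v k‖ ^ 2 := by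
  calc ‖∑ k ∈ s, c k • v k‖ ^ 2 ≤ (∑ k ∈ s, ‖c k‖ * ‖v k‖) ^ 2 := by
        gcongr
        exact (norm_sum_le _ _).trans_eq (by simp only [norm_smul])
    _ ≤ _ := Finset.sum_mul_sq_le_sq_mul_sq s _ _

section TensorProduct

variable {ι κ : Type*} [Fintype ι] [Fintype κ]

@[simp]
theorem tp_apply (x : EuclideanSpace ℂ ι) (z : EuclideanSpace ℂ κ) (p : ι × κ) :
    tp x z p = x p.1 * z p.2 := rfl

theorem norm_tp (x : EuclideanSpace ℂ ι) (z : EuclideanSpace ℂ κ) : ‖tp x z‖ = ‖x‖ * ‖z‖ := by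
  rw [EuclideanSpace.norm_eq, EuclideanSpace.norm_eq, EuclideanSpace.norm_eq,
    ← Real.sqrt_mul (by positivity), Fintype.sum_prod_type, Finset.sum_mul_sum]
  simp [mul_pow]

theorem tp_smul_right (x : EuclideanSpace ℂ ι) (c : ℂ) (z : EuclideanSpace ℂ κ) :
    tp x (c • z) = c • tp x z := by
  ext p; simp only [tp_apply, PiLp.smul_apply, smul_eq_mul]; ring

theorem sum_smul_tp {γ : Type*} (s : Finset γ) (c : γ → ℂ) (x : γ → EuclideanSpace ℂ ι)
    (z : EuclideanSpace ℂ κ) : ∑ k ∈ s, c k • tp (x k) z = tp (∑ k ∈ s, c k • x k) z := by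
  ext p; simp [Finset.sum_mul, mul_assoc]

theorem toEuclideanLin_kronecker_tp [DecidableEq ι] [DecidableEq κ] (A : Matrix ι ι ℂ)
    (B : Matrix κ κ ℂ) (x : EuclideanSpace ℂ ι) (z : EuclideanSpace ℂ κ) :
    Matrix.toEuclideanLin (A ⊗ₖ B) (tp x z) =
      tp (Matrix.toEuclideanLin A x) (Matrix.toEuclideanLin B z) := by
  ext p
  simp only [Matrix.toLpLin_apply, PiLp.toLp_apply, tp_apply, Matrix.mulVec, dotProduct,
    Fintype.sum_prod_type, Finset.sum_mul_sum, Matrix.kroneckerMap_apply]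
  refine Finset.sum_congr rfl fun i _ => Finset.sum_congr rfl fun j _ => ?_
  ring

theorem toEuclideanLin_single_one [DecidableEq κ] (j : κ) (z : EuclideanSpace ℂ κ) :
    Matrix.toEuclideanLin (Matrix.single j j (1 : ℂ)) z = z j • EuclideanSpace.single j 1 := by
  ext i
  simp [Matrix.single, PiLp.single_apply, ite_and, eq_comm, Matrix.mulVec, dotProduct]

theorem toEuclideanLin_kronecker_single_sum_smul_tp [DecidableEq ι] [DecidableEq κ] {γ : Type*}
    (A : Matrix ι ι ℂ) (j : κ) (s : Finset γ) (c : γ → ℂ) (x : γ → EuclideanSpace ℂ ι)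
    (z : γ → EuclideanSpace ℂ κ) :
    Matrix.toEuclideanLin (A ⊗ₖ Matrix.single j j (1 : ℂ)) (∑ k ∈ s, c k • tp (x k) (z k)) =
      tp (∑ k ∈ s, (c k * z k j) • Matrix.toEuclideanLin A (x k)) (EuclideanSpace.single j 1) := by
  simp only [map_sum, map_smul, toEuclideanLin_kronecker_tp, toEuclideanLin_single_one,
    tp_smul_right, smul_smul, sum_smul_tp]

theorem norm_toEuclideanLin_kronecker_single_sum_smul_tp [DecidableEq ι] [DecidableEq κ]
    {γ : Type*} (A : Matrix ι ι ℂ) (j : κ) (s : Finset γ) (c : γ → ℂ)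
    (x : γ → EuclideanSpace ℂ ι) (z : γ → EuclideanSpace ℂ κ) :
    ‖Matrix.toEuclideanLin (A ⊗ₖ Matrix.single j j (1 : ℂ)) (∑ k ∈ s, c k • tp (x k) (z k))‖ =
      ‖∑ k ∈ s, (c k * z k j) • Matrix.toEuclideanLin A (x k)‖ := by
  rw [toEuclideanLin_kronecker_single_sum_smul_tp, norm_tp, PiLp.norm_single, norm_one,
    mul_one]

end TensorProduct

theorem norm_ω_pow (N m : ℕ) : ‖ω N ^ m‖ = 1 := by
  rw [norm_pow, ω, Complex.norm_exp]
  simp [Complex.div_re]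

theorem fHat_apply (N : ℕ) (k y : Fin N) :
    fHat N k y = (Real.sqrt N : ℂ)⁻¹ * ω N ^ ((k : ℕ) * (y : ℕ)) := by
  simp [fHat, e, Pi.single_apply]

theorem norm_sq_toEuclideanLin_kronecker_single_sum_smul_tp_fHat {ι γ : Type*} [Fintype ι]
    [DecidableEq ι] {N : ℕ} (A : Matrix ι ι ℂ) (y : Fin N) (s : Finset γ) (α : γ → ℂ)
    (x : γ → EuclideanSpace ℂ ι) (f : γ → Fin N) :
    ‖Matrix.toEuclideanLin (A ⊗ₖ Matrix.single y y (1 : ℂ))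
        (∑ k ∈ s, α k • tp (x k) (fHat N (f k)))‖ ^ 2 =
      ‖∑ k ∈ s, (α k * ω N ^ ((f k : ℕ) * (y : ℕ))) • Matrix.toEuclideanLin A (x k)‖ ^ 2 / N := by
  simp_rw [norm_toEuclideanLin_kronecker_single_sum_smul_tp, fHat_apply, mul_left_comm (α _),
    ← smul_smul, ← Finset.smul_sum, norm_smul, mul_pow, norm_inv, Complex.norm_real,
    Real.norm_of_nonneg (Real.sqrt_nonneg _), inv_pow, Real.sq_sqrt (Nat.cast_nonneg N)]
  ring

theorem stmt_8_general {ι : Type*} [Fintype ι] [DecidableEq ι] {N : ℕ}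
    {q : ℕ} (hq : q + 1 ≤ N)
    (P : Fin N → Matrix ι ι ℂ)
    (hP_sa : ∀ y, (P y)ᴴ = P y) (hP_idem : ∀ y, P y * P y = P y)
    (hP_orth : ∀ y y', y ≠ y' → P y * P y' = 0)
    (α : Fin (q + 1) → ℂ) (ψk : Fin (q + 1) → EuclideanSpace ℂ ι)
    (hψk : ∀ k, ‖ψk k‖ = 1) (hα : ∑ k, ‖α k‖ ^ 2 ≤ 1) :
    ∑ y : Fin N,
        ‖Matrix.toEuclideanLin (P y ⊗ₖ Matrix.single y y (1 : ℂ))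
          (∑ k : Fin (q + 1), α k • tp (ψk k) (fHat N (Fin.castLE hq k)))‖ ^ 2
      ≤ ((q : ℝ) + 1) / N := by
  set T : Fin N → EuclideanSpace ℂ ι →ₗ[ℂ] EuclideanSpace ℂ ι :=
    fun y => Matrix.toEuclideanLin (P y)
  have hT : ∀ y, (T y).IsSymmetricProjection := fun y =>
    Matrix.isSymmetricProjection_toEuclideanLin (hP_sa y) (hP_idem y)
  have hT_orth : ∀ y y', y ≠ y' → T y * T y' = 0 := fun y y' h => by
    rw [Module.End.mul_eq_comp, ← Matrix.toLpLin_mul_same, hP_orth y y' h, map_zero]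
  set c : Fin N → Fin (q + 1) → ℂ := fun y k => α k * ω N ^ ((Fin.castLE hq k : ℕ) * (y : ℕ))
  have hcoeff : ∀ y, ‖∑ k, c y k • T y (ψk k)‖ ^ 2 ≤ ∑ k, ‖T y (ψk k)‖ ^ 2 := fun y =>
    calc _ ≤ (∑ k, ‖c y k‖ ^ 2) * ∑ k, ‖T y (ψk k)‖ ^ 2 := norm_sum_smul_sq_le _ _ _
      _ ≤ 1 * ∑ k, ‖T y (ψk k)‖ ^ 2 := by
          gcongr; simpa only [c, norm_mul, norm_ω_pow, mul_one] using hα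
      _ = _ := one_mul _
  calc _ = ∑ y, ‖∑ k, c y k • T y (ψk k)‖ ^ 2 / N :=
        Finset.sum_congr rfl fun y _ => norm_sq_toEuclideanLin_kronecker_single_sum_smul_tp_fHat ..
    _ ≤ ∑ y, (∑ k, ‖T y (ψk k)‖ ^ 2) / N := by gcongr with y; exact hcoeff y
    _ = (∑ k, ∑ y, ‖T y (ψk k)‖ ^ 2) / N := by rw [← Finset.sum_div, Finset.sum_comm]
    _ ≤ (∑ _k : Fin (q + 1), (1 : ℝ)) / N := by
        gcongr with k
        simpa [hψk k] using LinearMap.IsSymmetricProjection.sum_norm_sq_apply_le hT hT_orth (ψk k)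
    _ = ((q : ℝ) + 1) / N := by simp

/-- If `ψ = ∑_{k=0}^q α_k • (ψ_k ⊗ k̂)` with unit vectors `ψ_k`, `∑ |α_k|² ≤ 1` and
`0 ≤ q ≤ N-1`, and `(Π_y)_y` are orthogonal projections on `H` with pairwise orthogonal
ranges, then `∑_y ‖(Π_y ⊗ |e_y⟩⟨e_y|) ψ‖² ≤ (q+1)/N`. -/
theorem stmt_8 {ι : Type*} [Fintype ι] [DecidableEq ι] {N : ℕ} [NeZero N]
    {q : ℕ} (hq : q + 1 ≤ N)
    (P : Fin N → Matrix ι ι ℂ)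
    (hP_sa : ∀ y, (P y)ᴴ = P y) (hP_idem : ∀ y, P y * P y = P y)
    (hP_orth : ∀ y y', y ≠ y' → P y * P y' = 0)
    (α : Fin (q + 1) → ℂ) (ψk : Fin (q + 1) → EuclideanSpace ℂ ι)
    (hψk : ∀ k, ‖ψk k‖ = 1) (hα : ∑ k, ‖α k‖ ^ 2 ≤ 1) :
    ∑ y : Fin N,
        ‖Matrix.toEuclideanLin (P y ⊗ₖ Matrix.single y y (1 : ℂ))
          (∑ k : Fin (q + 1), α k • tp (ψk k) (fHat N (Fin.castLE hq k)))‖ ^ 2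
      ≤ ((q : ℝ) + 1) / N :=
  stmt_8_general hq P hP_sa hP_idem hP_orth α ψk hψk hα

end
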